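/- Let p, q ∈ (0,1/2). In the cumulative-teaching model with ε-majority learning, for every ε ∈ (0,1), the student's learning rate R_cum(ε) = limsup_{n→∞} −(1/n) log P(Θ̂_n^{(ε)} ≠ +1) satisfies R_cum(ε) ≥ min( (1−ε)·D(1/2‖p), ε·D(1/2‖q) ). Consequently, sup_{ε∈(0,1)} R_cum(ε) ≥ D(1/2‖p)·D(1/2‖q) / ( D(1/2‖p) + D(1/2‖q) ), i.e., the learning rate of cumulative teaching with optimally chosen ε-majority learning is at least as large as the optimized learning rate of the ε-teaching strategy. -/

import Mathlib

/-!
If the walk stays positive on the student's window `⌈(1-ε)n⌉ ≤ i ≤ n`, the teacher sends `+1`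
throughout it, and the student errs only if at least half of the `≥ εn` noise bits in the window
flip. Chernoff's bound for sums of independent `±1` variables bounds the probability that the walk
is nonpositive at a time `i ≥ (1-ε)n` by `e^{-i D(1/2‖p)}` and that of the noise majority flipping
by `e^{-εn D(1/2‖q)}`, so `P(error) ≤ (n+2) e^{-n min((1-ε) D(1/2‖p), ε D(1/2‖q))}`.
Conversely the error event contains the event that every step is `+1` and every noise bit in the
window flips, so `P(error) ≥ ((1-p)q)^{n+1} > 0`; this keeps the rates finite (`log 0 = 0` would
otherwise make them junk) and bounded in `ε`. The choice `ε = D(1/2‖p) / (D(1/2‖p) + D(1/2‖q))`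
balances the two exponents and gives the bound on the supremum.
-/

open MeasureTheory ProbabilityTheory Filter

noncomputable section

/-- Kullback–Leibler divergence `D(1/2 ‖ p)` between Bernoulli(1/2) and Bernoulli(p). -/
def Dhalf (p : ℝ) : ℝ := (1/2) * Real.log ((1/2)/p) + (1/2) * Real.log ((1/2)/(1-p))

variable {Ω : Type*} [MeasurableSpace Ω]

/-- The random walk `X_n = Y_1 + ⋯ + Y_n` (here the steps are indexed `Y 0, Y 1, …`). -/
def walk (Y : ℕ → Ω → ℤ) (n : ℕ) (ω : Ω) : ℤ := ∑ i ∈ Finset.range n, Y i ω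

/-- The sign process `X̂_n`: `+1` if `X_n > 0`, `-1` if `X_n < 0`, previous value if `X_n = 0`,
with `X̂_0 = +1`. -/
def sgnProc (Y : ℕ → Ω → ℤ) : ℕ → Ω → ℤ
  | 0 => fun _ => 1
  | n+1 => fun ω =>
      if 0 < walk Y (n+1) ω then 1
      else if walk Y (n+1) ω < 0 then -1
      else sgnProc Y n ω

/-- `M_n = #{1 ≤ i ≤ n : X̂_i = +1}`. -/
def Mcount (Y : ℕ → Ω → ℤ) (n : ℕ) (ω : Ω) : ℕ :=
  ((Finset.Icc 1 n).filter fun i => sgnProc Y i ω = 1).card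

/-- The error event of the cumulative-teaching + ε-majority-learning strategy at horizon `n`:
the student receives `Z_i = X̂_i · N_i` and estimates `Θ̂_n^{(ε)} = +1` iff
`#{⌈(1−ε)n⌉ ≤ i ≤ n : Z_i = +1} ≥ ⌊εn⌋/2`; the event is `Θ̂_n^{(ε)} ≠ +1`. -/
def cumErr (Y N : ℕ → Ω → ℤ) (ε : ℝ) (n : ℕ) : Set Ω :=
  {ω | ¬ ((⌊ε * (n:ℝ)⌋₊ : ℝ)/2 ≤
      (((Finset.Icc ⌈(1-ε) * (n:ℝ)⌉₊ n).filter
        fun i => sgnProc Y i ω * N i ω = 1).card : ℝ))}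

open Real Finset Topology

theorem Dhalf_eq_neg_log {r : ℝ} (hr0 : 0 < r) (hr1 : r < 1) :
    Dhalf r = -log (4 * (r * (1 - r))) / 2 := by
  have h1r : 0 < 1 - r := sub_pos.2 hr1
  rw [Dhalf, ← mul_add, ← log_mul (by positivity) (by positivity),
    show 1 / 2 / r * (1 / 2 / (1 - r)) = (4 * (r * (1 - r)))⁻¹ by field_simp; ring, log_inv]
  ring

theorem Dhalf_nonneg {r : ℝ} (hr0 : 0 < r) (hr1 : r < 1) : 0 ≤ Dhalf r := by
  rw [Dhalf_eq_neg_log hr0 hr1]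
  have : log (4 * (r * (1 - r))) ≤ 0 :=
    log_nonpos (by nlinarith) (by nlinarith [sq_nonneg (1 - 2 * r)])
  linarith

theorem Dhalf_pos {r : ℝ} (hr0 : 0 < r) (hr1 : r < 1) (hr : r ≠ 1 / 2) : 0 < Dhalf r := by
  rw [Dhalf_eq_neg_log hr0 hr1]
  have : log (4 * (r * (1 - r))) < 0 :=
    log_neg (by nlinarith) (by nlinarith [sq_pos_of_ne_zero (sub_ne_zero.2 hr)])
  linarith

/-- The minimum of the moment generating function of a `±1` variable with `P(-1) = r`, attained
at `e^{2t} = r / (1 - r)`. -/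
theorem one_sub_mul_exp_add_mul_exp_neg {r : ℝ} (hr0 : 0 < r) (hr1 : r < 1) :
    (1 - r) * exp ((log r - log (1 - r)) / 2) + r * exp (-((log r - log (1 - r)) / 2)) =
      exp (-Dhalf r) := by
  have h1r : 0 < 1 - r := sub_pos.2 hr1
  have hD : -Dhalf r = (log r + log (1 - r)) / 2 + log 2 := by
    rw [Dhalf_eq_neg_log hr0 hr1, log_mul (by norm_num) (by positivity), log_mul hr0.ne' h1r.ne',
      show (4 : ℝ) = 2 ^ 2 by norm_num, log_pow]
    push_cast; ring
  have hmul : ∀ x > 0, ∀ s, x * exp s = exp (log x + s) := fun x hx s => by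
    rw [exp_add, exp_log hx]
  calc (1 - r) * exp ((log r - log (1 - r)) / 2) + r * exp (-((log r - log (1 - r)) / 2))
      = 2 * exp ((log r + log (1 - r)) / 2) := by
        rw [hmul _ h1r, hmul _ hr0]; ring_nf
    _ = exp (-Dhalf r) := by rw [hD, exp_add, exp_log two_pos]; ring

section PlusMinusOne

variable {μ : Measure Ω}

theorem probReal_eq_neg_one [IsProbabilityMeasure μ] {X : Ω → ℤ} (hX : Measurable X)
    (hX1 : ∀ ω, X ω = 1 ∨ X ω = -1) :
    μ.real {ω | X ω = -1} = 1 - μ.real {ω | X ω = 1} := by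
  have : {ω | X ω = -1} = {ω | X ω = 1}ᶜ := by
    ext ω; rcases hX1 ω with h | h <;> simp [h]
  rw [this]
  exact probReal_compl_eq_one_sub (hX (measurableSet_singleton 1))

theorem mgf_intCast_of_pm_one [IsFiniteMeasure μ] {X : Ω → ℤ} (hX : Measurable X)
    (hX1 : ∀ ω, X ω = 1 ∨ X ω = -1) (t : ℝ) :
    mgf (fun ω => (X ω : ℝ)) μ t =
      μ.real {ω | X ω = 1} * exp t + μ.real {ω | X ω = -1} * exp (-t) := by
  have hm1 : MeasurableSet {ω | X ω = 1} := hX (measurableSet_singleton 1)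
  have hm2 : MeasurableSet {ω | X ω = -1} := hX (measurableSet_singleton (-1))
  have : (fun ω => exp (t * X ω)) = fun ω => {ω | X ω = 1}.indicator (fun _ => exp t) ω +
      {ω | X ω = -1}.indicator (fun _ => exp (-t)) ω := by
    funext ω; rcases hX1 ω with h | h <;> simp [h]
  rw [mgf, this, integral_add ((integrable_indicator_iff hm1).2 integrableOn_const)
      ((integrable_indicator_iff hm2).2 integrableOn_const),
    integral_indicator_const _ hm1, integral_indicator_const _ hm2, smul_eq_mul, smul_eq_mul]

theorem probReal_sum_nonpos_le [IsProbabilityMeasure μ] {ι : Type*} {X : ι → Ω → ℤ}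
    (hX : ∀ i, Measurable (X i)) (hX1 : ∀ i ω, X i ω = 1 ∨ X i ω = -1) (hindep : iIndepFun X μ)
    {r : ℝ} (hr0 : 0 < r) (hr : r ≤ 1 / 2) (hdist : ∀ i, μ.real {ω | X i ω = -1} = r)
    (s : Finset ι) :
    μ.real {ω | ∑ i ∈ s, X i ω ≤ 0} ≤ exp (-(#s * Dhalf r)) := by
  set t := (log r - log (1 - r)) / 2
  have ht : t ≤ 0 := by
    have := log_le_log hr0 (show r ≤ 1 - r by linarith)
    simp only [t]; linarith
  set Xr : ι → Ω → ℝ := fun i ω => X i ω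
  have hXr : ∀ i, Measurable (Xr i) := fun i => Measurable.of_discrete.comp (hX i)
  have hindep' : iIndepFun Xr μ := hindep.comp (fun _ => Int.cast) (fun _ => Measurable.of_discrete)
  have hmgf : ∀ i, mgf (Xr i) μ t = exp (-Dhalf r) := fun i => by
    have h1 : μ.real {ω | X i ω = 1} = 1 - r := by
      linarith [probReal_eq_neg_one (μ := μ) (hX i) (hX1 i), hdist i]
    rw [mgf_intCast_of_pm_one (hX i) (hX1 i), h1, hdist i]
    exact one_sub_mul_exp_add_mul_exp_neg hr0 (by linarith)
  have hint : Integrable (fun ω => exp (t * (∑ i ∈ s, Xr i) ω)) μ :=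
    hindep'.integrable_exp_mul_sum hXr fun i _ => integrable_exp_mul_of_mem_Icc (a := -1) (b := 1)
      (hXr i).aemeasurable (ae_of_all _ fun ω => by rcases hX1 i ω with h | h <;> simp [Xr, h])
  have h := measure_le_le_exp_mul_mgf 0 ht hint
  rw [hindep'.mgf_sum hXr, prod_congr rfl fun i _ => hmgf i, prod_const, mul_zero, exp_zero,
    one_mul, ← exp_nat_mul, mul_neg] at h
  convert h using 3
  ext ω
  simp only [Finset.sum_apply, Xr]
  norm_cast

end PlusMinusOne

theorem ProbabilityTheory.iIndepFun.measure_inter_biInter_sumElim {ι κ β : Type*}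
    [MeasurableSpace β] {μ : Measure Ω} {Y : ι → Ω → β} {N : κ → Ω → β}
    (h : iIndepFun (Sum.elim Y N) μ)
    (s : Finset ι) (t : Finset κ) {A : ι → Set β} {B : κ → Set β}
    (hA : ∀ i, MeasurableSet (A i)) (hB : ∀ j, MeasurableSet (B j)) :
    μ ((⋂ i ∈ s, Y i ⁻¹' A i) ∩ ⋂ j ∈ t, N j ⁻¹' B j) =
      (∏ i ∈ s, μ (Y i ⁻¹' A i)) * ∏ j ∈ t, μ (N j ⁻¹' B j) := by
  have h := h.measure_inter_preimage_eq_mul (s.disjSum t) (sets := Sum.elim A B)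
    fun i _ => by cases i <;> simp [hA, hB]
  simp only [prod_disjSum, Sum.elim_inl, Sum.elim_inr] at h
  convert h using 2
  ext ω
  simp [mem_disjSum]

def majorityWindow (ε : ℝ) (n : ℕ) : Finset ℕ := Icc ⌈(1 - ε) * n⌉₊ n

omit [MeasurableSpace Ω] in
theorem mem_cumErr {Y N : ℕ → Ω → ℤ} {ε : ℝ} {n : ℕ} {ω : Ω} :
    ω ∈ cumErr Y N ε n ↔
      (#{i ∈ majorityWindow ε n | sgnProc Y i ω * N i ω = 1} : ℝ) < ⌊ε * n⌋₊ / 2 :=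
  not_le

theorem mul_le_card_majorityWindow {ε : ℝ} (hε0 : 0 ≤ ε) (hε1 : ε ≤ 1) (n : ℕ) :
    ε * n ≤ #(majorityWindow ε n) := by
  have hm : (⌈(1 - ε) * n⌉₊ : ℝ) < (1 - ε) * n + 1 := Nat.ceil_lt_add_one (by positivity)
  have hmn : ⌈(1 - ε) * n⌉₊ ≤ n := Nat.ceil_le.2 (by nlinarith)
  rw [majorityWindow, Nat.card_Icc, Nat.cast_sub (by omega)]
  push_cast
  linarith

theorem card_majorityWindow_le (ε : ℝ) (n : ℕ) : #(majorityWindow ε n) ≤ n + 1 := by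
  rw [majorityWindow, Nat.card_Icc]; omega

omit [MeasurableSpace Ω] in
theorem sgnProc_eq_one_of_walk_pos {Y : ℕ → Ω → ℤ} {i : ℕ} {ω : Ω} (h : 0 < walk Y i ω) :
    sgnProc Y i ω = 1 := by
  cases i with
  | zero => rfl
  | succ i => exact if_pos h

theorem sum_eq_two_mul_card_filter_sub_card {ι : Type*} {s : Finset ι} {f : ι → ℤ}
    (hf : ∀ i ∈ s, f i = 1 ∨ f i = -1) :
    ∑ i ∈ s, f i = 2 * #{i ∈ s | f i = 1} - #s := by
  rw [natCast_card_filter, card_eq_sum_ones, mul_sum, Nat.cast_sum, ← sum_sub_distrib]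
  refine sum_congr rfl fun i hi => ?_
  rcases hf i hi with h | h <;> simp [h]

omit [MeasurableSpace Ω] in
/-- On the error event either the walk is nonpositive somewhere in the window, so that the teacher
may have sent `-1`, or the noise flips at least half of the window. -/
theorem cumErr_subset {Y N : ℕ → Ω → ℤ} (hN : ∀ i ω, N i ω = 1 ∨ N i ω = -1) {ε : ℝ}
    (hε0 : 0 ≤ ε) (hε1 : ε ≤ 1) (n : ℕ) :
    cumErr Y N ε n ⊆ (⋃ i ∈ majorityWindow ε n, {ω | walk Y i ω ≤ 0}) ∪
      {ω | ∑ i ∈ majorityWindow ε n, N i ω ≤ 0} := by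
  intro ω hω
  by_contra h
  simp only [Set.mem_union, Set.mem_iUnion, Set.mem_ofPred_eq, not_or, not_exists, not_le] at h
  obtain ⟨hwalk, hsum⟩ := h
  set W := majorityWindow ε n
  have hfilter : {i ∈ W | sgnProc Y i ω * N i ω = 1} = {i ∈ W | N i ω = 1} :=
    filter_congr fun i hi => by rw [sgnProc_eq_one_of_walk_pos (hwalk i hi), one_mul]
  rw [mem_cumErr, hfilter] at hω
  rw [sum_eq_two_mul_card_filter_sub_card fun i _ => hN i ω] at hsum
  have hW : #W < 2 * #{i ∈ W | N i ω = 1} := by omega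
  have hk : (⌊ε * n⌋₊ : ℝ) ≤ #W :=
    (Nat.floor_le (by positivity)).trans (mul_le_card_majorityWindow hε0 hε1 n)
  have : (#W : ℝ) < 2 * #{i ∈ W | N i ω = 1} := by exact_mod_cast hW
  linarith

section ErrorProbability

variable {μ : Measure Ω} [IsProbabilityMeasure μ] {Y N : ℕ → Ω → ℤ} {p q ε : ℝ}

theorem probReal_cumErr_le (hp0 : 0 < p) (hp : p ≤ 1 / 2) (hq0 : 0 < q) (hq : q ≤ 1 / 2)
    (hε0 : 0 ≤ ε) (hε1 : ε ≤ 1) (hYmeas : ∀ i, Measurable (Y i)) (hNmeas : ∀ i, Measurable (N i))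
    (hYrange : ∀ i ω, Y i ω = 1 ∨ Y i ω = -1) (hNrange : ∀ i ω, N i ω = 1 ∨ N i ω = -1)
    (hYdist : ∀ i, μ.real {ω | Y i ω = -1} = p) (hNdist : ∀ i, μ.real {ω | N i ω = -1} = q)
    (hYindep : iIndepFun Y μ) (hNindep : iIndepFun N μ) (n : ℕ) :
    μ.real (cumErr Y N ε n) ≤ (n + 2) * exp (-(n * min ((1 - ε) * Dhalf p) (ε * Dhalf q))) := by
  set W := majorityWindow ε n
  set K := min ((1 - ε) * Dhalf p) (ε * Dhalf q)
  have hDp := Dhalf_nonneg hp0 (by linarith)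
  have hDq := Dhalf_nonneg hq0 (by linarith)
  have hwalk : ∀ i ∈ W, μ.real {ω | walk Y i ω ≤ 0} ≤ exp (-(n * K)) := fun i hi => by
    refine (probReal_sum_nonpos_le hYmeas hYrange hYindep hp0 hp hYdist (range i)).trans ?_
    have hi : (1 - ε) * n ≤ i := Nat.ceil_le.1 (mem_Icc.1 hi).1
    rw [card_range, exp_le_exp, neg_le_neg_iff]
    calc n * K ≤ n * ((1 - ε) * Dhalf p) := by gcongr; exact min_le_left _ _
      _ = (1 - ε) * n * Dhalf p := by ring
      _ ≤ i * Dhalf p := by gcongr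
  have hnoise : μ.real {ω | ∑ i ∈ W, N i ω ≤ 0} ≤ exp (-(n * K)) := by
    refine (probReal_sum_nonpos_le hNmeas hNrange hNindep hq0 hq hNdist W).trans ?_
    rw [exp_le_exp, neg_le_neg_iff]
    calc n * K ≤ n * (ε * Dhalf q) := by gcongr; exact min_le_right _ _
      _ = ε * n * Dhalf q := by ring
      _ ≤ #W * Dhalf q := by gcongr; exact mul_le_card_majorityWindow hε0 hε1 n
  have hW : (#W : ℝ) ≤ n + 1 := by exact_mod_cast card_majorityWindow_le ε n
  calc μ.real (cumErr Y N ε n)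
      ≤ μ.real ((⋃ i ∈ W, {ω | walk Y i ω ≤ 0}) ∪ {ω | ∑ i ∈ W, N i ω ≤ 0}) :=
        measureReal_mono (cumErr_subset hNrange hε0 hε1 n)
    _ ≤ ∑ i ∈ W, μ.real {ω | walk Y i ω ≤ 0} + μ.real {ω | ∑ i ∈ W, N i ω ≤ 0} :=
        (measureReal_union_le _ _).trans (by gcongr; exact measureReal_biUnion_finset_le _ _)
    _ ≤ #W * exp (-(n * K)) + exp (-(n * K)) := by
        gcongr
        simpa using sum_le_sum hwalk
    _ ≤ (n + 2) * exp (-(n * K)) := by nlinarith [exp_pos (-(n * K))]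

/-- If the teacher's walk goes straight up and every noise bit in the window flips, the student
errs. -/
theorem pow_le_probReal_cumErr {a b : ℝ} (hε1 : ε < 1) (n : ℕ) (hεn : 1 ≤ ε * n)
    (hindep : iIndepFun (Sum.elim Y N) μ) (hYdist : ∀ i, μ.real {ω | Y i ω = 1} = a)
    (hNdist : ∀ i, μ.real {ω | N i ω = -1} = b) :
    (a * b) ^ (n + 1) ≤ μ.real (cumErr Y N ε n) := by
  have hn : 0 < (1 - ε) * n := mul_pos (sub_pos.2 hε1) (Nat.cast_pos.2 (Nat.pos_of_ne_zero
    (by rintro rfl; norm_num at hεn)))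
  set W := majorityWindow ε n
  set E := (⋂ i ∈ range n, Y i ⁻¹' {1}) ∩ ⋂ j ∈ W, N j ⁻¹' {-1}
  have hE : E ⊆ cumErr Y N ε n := by
    rintro ω ⟨hY, hN⟩
    simp only [Set.mem_iInter, Set.mem_preimage, Set.mem_singleton_iff] at hY hN
    have hempty : {i ∈ W | sgnProc Y i ω * N i ω = 1} = ∅ := filter_eq_empty_iff.2 fun i hi => by
      obtain ⟨hmi, hin⟩ := mem_Icc.1 hi
      have hi0 : 0 < i := (Nat.ceil_pos.2 hn).trans_le hmi
      have hwalk : walk Y i ω = i := by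
        rw [walk, sum_congr rfl fun j hj => hY j (by simp at hj ⊢; omega)]; simp
      rw [sgnProc_eq_one_of_walk_pos (by omega), hN i hi]
      norm_num
    rw [mem_cumErr, hempty, card_empty, Nat.cast_zero]
    have : (1 : ℝ) ≤ ⌊ε * n⌋₊ := by exact_mod_cast (Nat.one_le_floor_iff _).2 hεn
    linarith
  have hμE : μ.real E = a ^ n * b ^ #W := by
    rw [measureReal_def, hindep.measure_inter_biInter_sumElim _ _
      (fun _ => measurableSet_singleton _) (fun _ => measurableSet_singleton _),
      ENNReal.toReal_mul, ENNReal.toReal_prod, ENNReal.toReal_prod]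
    simp only [← measureReal_def, Set.preimage, Set.mem_singleton_iff, hYdist, hNdist, prod_const,
      card_range]
  have ha : a ≤ 1 := hYdist 0 ▸ measureReal_le_one
  have hb : b ≤ 1 := hNdist 0 ▸ measureReal_le_one
  have ha0 : 0 ≤ a := hYdist 0 ▸ measureReal_nonneg
  have hb0 : 0 ≤ b := hNdist 0 ▸ measureReal_nonneg
  calc (a * b) ^ (n + 1) = a ^ (n + 1) * b ^ (n + 1) := mul_pow _ _ _
    _ ≤ a ^ n * b ^ #W := mul_le_mul (pow_le_pow_of_le_one ha0 ha n.le_succ)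
        (pow_le_pow_of_le_one hb0 hb (card_majorityWindow_le ε n)) (by positivity) (by positivity)
    _ = μ.real E := hμE.symm
    _ ≤ μ.real (cumErr Y N ε n) := measureReal_mono hE

end ErrorProbability

section Rate

variable {u : ℕ → ℝ} {b K : ℝ}

theorem tendsto_log_add_two_div_atTop : Tendsto (fun n : ℕ => log (n + 2) / n) atTop (𝓝 0) := by
  have h := (tendsto_pow_log_div_mul_add_atTop 1 (-2) 1 one_ne_zero).comp
    (tendsto_atTop_add_const_right atTop 2 tendsto_natCast_atTop_atTop)
  refine h.congr fun n => ?_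
  simp

theorem neg_log_div_le_of_pow_le (hb0 : 0 < b) (hb1 : b ≤ 1) {n : ℕ} (hn : n ≠ 0) {x : ℝ}
    (hx : b ^ (n + 1) ≤ x) : -log x / n ≤ -2 * log b := by
  have hlog : (n + 1) * log b ≤ log x := by
    have := log_le_log (by positivity) hx
    rwa [log_pow, Nat.cast_succ] at this
  have hb : log b ≤ 0 := log_nonpos hb0.le hb1
  have hn1 : (1 : ℝ) ≤ n := by exact_mod_cast Nat.one_le_iff_ne_zero.2 hn
  rw [div_le_iff₀ (by positivity)]
  nlinarith

theorem le_limsup_neg_log_div (hb0 : 0 < b) (hb1 : b ≤ 1)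
    (hlow : ∀ᶠ n in atTop, b ^ (n + 1) ≤ u n) (hup : ∀ n, u n ≤ (n + 2) * exp (-(n * K))) :
    K ≤ limsup (fun n : ℕ => -log (u n) / n) atTop := by
  have hbdd : IsBoundedUnder (· ≤ ·) atTop (fun n : ℕ => -log (u n) / n) :=
    isBoundedUnder_of_eventually_le ((hlow.and (eventually_ne_atTop 0)).mono fun n hn =>
      neg_log_div_le_of_pow_le hb0 hb1 hn.2 hn.1)
  have hlim : Tendsto (fun n : ℕ => K - log (n + 2) / n) atTop (𝓝 K) := by
    simpa using tendsto_log_add_two_div_atTop.const_sub K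
  have hle : ∀ᶠ n : ℕ in atTop, K - log (n + 2) / n ≤ -log (u n) / n := by
    filter_upwards [hlow, eventually_ne_atTop 0] with n hun hn
    have hn' : (0 : ℝ) < n := by positivity
    have hlog := log_le_log ((pow_pos hb0 _).trans_le hun) (hup n)
    rw [log_mul (by positivity) (exp_pos _).ne', log_exp] at hlog
    rw [show K - log (n + 2) / n = (n * K - log (n + 2)) / n by field_simp]
    exact div_le_div_of_nonneg_right (by linarith) hn'.le
  calc K = limsup (fun n : ℕ => K - log (n + 2) / n) atTop := hlim.limsup_eq.symm
    _ ≤ _ := limsup_le_limsup hle hlim.isCoboundedUnder_le hbdd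

theorem limsup_neg_log_div_le (hb0 : 0 < b) (hb1 : b ≤ 1)
    (hlow : ∀ᶠ n in atTop, b ^ (n + 1) ≤ u n) (hu : ∀ n, u n ∈ Set.Icc 0 1) :
    limsup (fun n : ℕ => -log (u n) / n) atTop ≤ -2 * log b :=
  limsup_le_of_le (isCoboundedUnder_le_of_le atTop fun n =>
      div_nonneg (neg_nonneg.2 (log_nonpos (hu n).1 (hu n).2)) n.cast_nonneg)
    ((hlow.and (eventually_ne_atTop 0)).mono fun _ hn => neg_log_div_le_of_pow_le hb0 hb1 hn.2 hn.1)

end Rate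

theorem exists_mem_Ioo_min_one_sub_mul_mul_eq {a b : ℝ} (ha : 0 < a) (hb : 0 < b) :
    ∃ ε ∈ Set.Ioo (0 : ℝ) 1, min ((1 - ε) * a) (ε * b) = a * b / (a + b) := by
  refine ⟨a / (a + b), ⟨by positivity, (div_lt_one (by positivity)).2 (by linarith)⟩, ?_⟩
  have h1 : (1 - a / (a + b)) * a = a * b / (a + b) := by field_simp; ring
  have h2 : a / (a + b) * b = a * b / (a + b) := by ring
  rw [h1, h2, min_self]

/-- In the cumulative-teaching model with ε-majority learning, for every
`ε ∈ (0,1)` the learning rate `R_cum(ε) = limsup −(1/n) log P(Θ̂_n^{(ε)} ≠ +1)` satisfies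
`R_cum(ε) ≥ min((1−ε)D(1/2‖p), ε·D(1/2‖q))`; consequently
`sup_{ε∈(0,1)} R_cum(ε) ≥ D(1/2‖p)·D(1/2‖q)/(D(1/2‖p)+D(1/2‖q))`. -/
theorem stmt8
    (μ : Measure Ω) [IsProbabilityMeasure μ]
    (p q : ℝ) (hp : p ∈ Set.Ioo (0:ℝ) (1/2)) (hq : q ∈ Set.Ioo (0:ℝ) (1/2))
    (Y N : ℕ → Ω → ℤ)
    (hYmeas : ∀ i, Measurable (Y i)) (hNmeas : ∀ i, Measurable (N i))
    (hYrange : ∀ i ω, Y i ω = 1 ∨ Y i ω = -1)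
    (hNrange : ∀ i ω, N i ω = 1 ∨ N i ω = -1)
    (hYdist : ∀ i, μ {ω | Y i ω = 1} = ENNReal.ofReal (1 - p))
    (hNdist : ∀ i, μ {ω | N i ω = -1} = ENNReal.ofReal q)
    (hindep : iIndepFun (Sum.elim Y N) μ) :
    (∀ ε ∈ Set.Ioo (0:ℝ) 1,
      min ((1-ε) * Dhalf p) (ε * Dhalf q) ≤
        Filter.limsup
          (fun n : ℕ => -(Real.log ((μ (cumErr Y N ε n)).toReal)) / (n : ℝ)) atTop) ∧
    Dhalf p * Dhalf q / (Dhalf p + Dhalf q) ≤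
      sSup ((fun ε => Filter.limsup
          (fun n : ℕ => -(Real.log ((μ (cumErr Y N ε n)).toReal)) / (n : ℝ)) atTop)
        '' Set.Ioo (0:ℝ) 1) := by
  obtain ⟨hp0, hp1⟩ := hp
  obtain ⟨hq0, hq1⟩ := hq
  have hY1 : ∀ i, μ.real {ω | Y i ω = 1} = 1 - p := fun i => by
    rw [measureReal_def, hYdist, ENNReal.toReal_ofReal (by linarith)]
  have hYm1 : ∀ i, μ.real {ω | Y i ω = -1} = p := fun i => by
    rw [probReal_eq_neg_one (hYmeas i) (hYrange i), hY1]; ring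
  have hNm1 : ∀ i, μ.real {ω | N i ω = -1} = q := fun i => by
    rw [measureReal_def, hNdist, ENNReal.toReal_ofReal hq0.le]
  have hYindep : iIndepFun Y μ := hindep.precomp (g := Sum.inl) Sum.inl_injective
  have hNindep : iIndepFun N μ := hindep.precomp (g := Sum.inr) Sum.inr_injective
  have hb0 : 0 < (1 - p) * q := by nlinarith
  have hb1 : (1 - p) * q ≤ 1 := by nlinarith
  have hlow : ∀ ε ∈ Set.Ioo (0 : ℝ) 1,
      ∀ᶠ n : ℕ in atTop, ((1 - p) * q) ^ (n + 1) ≤ μ.real (cumErr Y N ε n) := fun ε hε =>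
    ((tendsto_natCast_atTop_atTop.const_mul_atTop hε.1).eventually_ge_atTop 1).mono fun n hn =>
      pow_le_probReal_cumErr hε.2 n hn hindep hY1 hNm1
  have hrate : ∀ ε ∈ Set.Ioo (0 : ℝ) 1, min ((1 - ε) * Dhalf p) (ε * Dhalf q) ≤
      limsup (fun n : ℕ => -log (μ.real (cumErr Y N ε n)) / n) atTop := fun ε hε =>
    le_limsup_neg_log_div hb0 hb1 (hlow ε hε) (probReal_cumErr_le hp0 hp1.le hq0 hq1.le hε.1.le
      hε.2.le hYmeas hNmeas hYrange hNrange hYm1 hNm1 hYindep hNindep)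
  refine ⟨hrate, ?_⟩
  obtain ⟨ε, hε, hmin⟩ := exists_mem_Ioo_min_one_sub_mul_mul_eq
    (Dhalf_pos hp0 (by linarith) hp1.ne) (Dhalf_pos hq0 (by linarith) hq1.ne)
  rw [← hmin]
  refine (hrate ε hε).trans (le_csSup ⟨-2 * log ((1 - p) * q), ?_⟩ ⟨ε, hε, rfl⟩)
  rintro _ ⟨ε', hε', rfl⟩
  exact limsup_neg_log_div_le hb0 hb1 (hlow ε' hε') fun _ =>
    ⟨measureReal_nonneg, measureReal_le_one⟩
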